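/- For the purely nonlinear oscillator ẍ + c²·sgn(x)·|x|^α = 0 with initial conditions x(0) = q₀ > 0, ẋ(0) = 0, the period given by T = (4√2/(c√(α+1)))·q₀^((1-α)/2)·∫₀^{π/2}(sin θ)^((1-α)/(1+α)) dθ equals √(8π/(c²(α+1)))·(Γ(1/(α+1))/Γ((α+3)/(2(α+1))))·q₀^((1-α)/2). -/

import Mathlib

/-! The substitution `x = sin² θ`, an injective change of variables on `(0, π/2)`, turns
`∫₀^{π/2} sin^{2u-1} θ cos^{2v-1} θ dθ` into half of Euler's Beta integral
`B(u, v) = Γ(u) Γ(v) / Γ(u + v)`. For `u = 1/(α+1)` and `v = 1/2` the cosine factor disappears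
and `Γ(1/2) = √π`. -/

open Real MeasureTheory Set

theorem integral_Ioo_rpow_mul_one_sub_rpow {u v : ℝ} (hu : 0 < u) (hv : 0 < v) :
    ∫ x in Ioo (0 : ℝ) 1, x ^ (u - 1) * (1 - x) ^ (v - 1) =
      Gamma u * Gamma v / Gamma (u + v) := by
  have h := Complex.betaIntegral_eq_Gamma_mul_div u v (by simpa) (by simpa)
  rw [Complex.betaIntegral, intervalIntegral.integral_of_le zero_le_one,
    integral_Ioc_eq_integral_Ioo, ← Complex.ofReal_add, Complex.Gamma_ofReal,
    Complex.Gamma_ofReal, Complex.Gamma_ofReal,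
    setIntegral_congr_fun measurableSet_Ioo
      (g := fun x : ℝ => ((x ^ (u - 1) * (1 - x) ^ (v - 1) : ℝ) : ℂ)) fun x hx => by
        push_cast
        rw [Complex.ofReal_cpow hx.1.le, Complex.ofReal_cpow (sub_nonneg.2 hx.2.le)]
        push_cast; rfl,
    integral_complex_ofReal] at h
  exact_mod_cast h

theorem image_sin_sq_Ioo : (fun θ => sin θ ^ 2) '' Ioo 0 (π / 2) = Ioo 0 1 := by
  ext x
  constructor
  · rintro ⟨θ, hθ, rfl⟩
    have hsin : 0 < sin θ := sin_pos_of_pos_of_lt_pi hθ.1 (by linarith [pi_pos, hθ.2])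
    have hcos : 0 < cos θ := cos_pos_of_mem_Ioo ⟨by linarith [pi_pos, hθ.1], hθ.2⟩
    exact ⟨by positivity, by nlinarith [sin_sq_add_cos_sq θ]⟩
  · rintro ⟨hx₀, hx₁⟩
    have hs₀ : 0 < √x := sqrt_pos.2 hx₀
    have hs₁ : √x < 1 := (sqrt_lt' one_pos).2 (by simpa using hx₁)
    refine ⟨arcsin √x, ⟨arcsin_pos.2 hs₀, arcsin_lt_pi_div_two.2 hs₁⟩, ?_⟩
    simp only [sin_arcsin (by linarith) hs₁.le, sq_sqrt hx₀.le]

theorem injOn_sin_sq : InjOn (fun θ => sin θ ^ 2) (Ioo 0 (π / 2)) := by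
  intro a ha b hb hab
  have hsin : ∀ θ ∈ Ioo 0 (π / 2), 0 ≤ sin θ := fun θ hθ =>
    sin_nonneg_of_nonneg_of_le_pi hθ.1.le (by linarith [pi_pos, hθ.2])
  have hIcc : ∀ θ ∈ Ioo 0 (π / 2), θ ∈ Icc (-(π / 2)) (π / 2) := fun θ hθ =>
    ⟨by linarith [pi_pos, hθ.1], hθ.2.le⟩
  exact injOn_sin (hIcc a ha) (hIcc b hb)
    ((pow_left_inj₀ (hsin a ha) (hsin b hb) two_ne_zero).1 hab)

theorem integral_sin_rpow_mul_cos_rpow {u v : ℝ} (hu : 0 < u) (hv : 0 < v) :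
    ∫ θ in (0 : ℝ)..(π / 2), sin θ ^ (2 * u - 1) * cos θ ^ (2 * v - 1) =
      Gamma u * Gamma v / (2 * Gamma (u + v)) := by
  have hcov := integral_image_eq_integral_abs_deriv_smul (f := fun θ => sin θ ^ 2)
    (f' := fun θ => 2 * sin θ * cos θ) measurableSet_Ioo
    (fun θ _ => by simpa using ((hasDerivAt_sin θ).fun_pow 2).hasDerivWithinAt) injOn_sin_sq
    (fun x => x ^ (u - 1) * (1 - x) ^ (v - 1))
  rw [image_sin_sq_Ioo, integral_Ioo_rpow_mul_one_sub_rpow hu hv] at hcov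
  rw [intervalIntegral.integral_of_le (by positivity), integral_Ioc_eq_integral_Ioo,
    div_mul_eq_div_div_swap, hcov, ← integral_div]
  refine setIntegral_congr_fun measurableSet_Ioo fun θ hθ => ?_
  have hsin : 0 < sin θ := sin_pos_of_pos_of_lt_pi hθ.1 (by linarith [pi_pos, hθ.2])
  have hcos : 0 < cos θ := cos_pos_of_mem_Ioo ⟨by linarith [pi_pos, hθ.1], hθ.2⟩
  have hpow : ∀ {y : ℝ}, 0 < y → ∀ w : ℝ, (y ^ 2) ^ (w - 1) = y ^ (2 * w - 1) / y :=
    fun hy w => by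
      rw [← rpow_natCast, ← rpow_mul hy.le, ← rpow_sub_one hy.ne']; push_cast; ring_nf
  simp only [smul_eq_mul, ← cos_sq', hpow hsin, hpow hcos]
  rw [abs_of_pos (by positivity)]
  field_simp

theorem stmt4_general (c α q₀ : ℝ) (hc : 0 < c) (hα : 0 < α) :
    (4 * Real.sqrt 2 / (c * Real.sqrt (α + 1))) * q₀ ^ ((1 - α) / 2) *
        ∫ θ in (0:ℝ)..(π / 2), (Real.sin θ) ^ ((1 - α) / (1 + α)) =
      Real.sqrt (8 * π / (c ^ 2 * (α + 1))) *
        (Real.Gamma (1 / (α + 1)) / Real.Gamma ((α + 3) / (2 * (α + 1)))) *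
        q₀ ^ ((1 - α) / 2) := by
  have hα₁ : 0 < α + 1 := by linarith
  have hintegral : ∫ θ in (0:ℝ)..(π / 2), sin θ ^ ((1 - α) / (1 + α)) =
      Gamma (1 / (α + 1)) * √π / (2 * Gamma ((α + 3) / (2 * (α + 1)))) := by
    have h := integral_sin_rpow_mul_cos_rpow (u := 1 / (α + 1)) (v := 1 / 2) (by positivity)
      one_half_pos
    rw [show 2 * (1 / 2 : ℝ) - 1 = 0 by norm_num,
      show 2 * (1 / (α + 1)) - 1 = (1 - α) / (1 + α) by field_simp; ring,
      show 1 / (α + 1) + 1 / 2 = (α + 3) / (2 * (α + 1)) by field_simp; ring,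
      Gamma_one_half_eq] at h
    simpa only [rpow_zero, mul_one] using h
  have hsqrt : √(8 * π / (c ^ 2 * (α + 1))) = 2 * √2 * √π / (c * √(α + 1)) := by
    rw [sqrt_eq_iff_eq_sq (by positivity) (by positivity), div_pow, mul_pow, mul_pow, mul_pow,
      sq_sqrt zero_le_two, sq_sqrt pi_pos.le, sq_sqrt hα₁.le]
    ring
  have hΓ : 0 < Gamma ((α + 3) / (2 * (α + 1))) := Gamma_pos_of_pos (by positivity)
  rw [hintegral, hsqrt]
  field_simp
  ring

theorem stmt4 (c α q₀ : ℝ) (hc : 0 < c) (hα : 0 < α) (hq : 0 < q₀) :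
    (4 * Real.sqrt 2 / (c * Real.sqrt (α + 1))) * q₀ ^ ((1 - α) / 2) *
        ∫ θ in (0:ℝ)..(π / 2), (Real.sin θ) ^ ((1 - α) / (1 + α)) =
      Real.sqrt (8 * π / (c ^ 2 * (α + 1))) *
        (Real.Gamma (1 / (α + 1)) / Real.Gamma ((α + 3) / (2 * (α + 1)))) *
        q₀ ^ ((1 - α) / 2) :=
  stmt4_general c α q₀ hc hα
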